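/- arXiv:2212.11552 — 3 statements merged into one kernel-verified Lean document; each statement's English description precedes it below -/
import Mathlib

section
/- Let f_a(v) = (ρS/2)‖v‖² c(α(v), β(v)) for v ∈ ℝ³, where α(v) = arctan(v₃/v₁) and β(v) = arcsin(v₂/‖v‖), and c : ℝ² → ℝ³ is differentiable with ∂c/∂β(α, 0) of the form (0, *, 0)ᵀ. Then at any point v with v₂ = 0, the Jacobian of f_a is ∂f_a/∂v = (ρS/2)(2c vᵀ + (∂c/∂α) vᵀ⌊e₂⌋ + ‖v‖ (∂c/∂β) e₂ᵀ), where c, ∂c/∂α, ∂c/∂β are evaluated at (α(v), 0). -/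
open Matrix Real

noncomputable def norm3 (v : Fin 3 → ℝ) : ℝ := Real.sqrt (v ⬝ᵥ v)

def e2 : Fin 3 → ℝ := ![0, 1, 0]

/-! By the product and chain rules,
`∂f_a/∂v · w = (ρS/2) (2 (v ⬝ w) c + ‖v‖² (dα(w) ∂c/∂α + dβ(w) ∂c/∂β))`.
The angle of attack has `dα(w) = (v₁ w₃ - v₃ w₁) / (v₁² + v₃²)`; at zero sideslip
`v₁² + v₃² = ‖v‖²`, and the numerator is `v ⬝ (e₂ × w)`. For the sideslip, `v₂ / ‖v‖` vanishes
at `v`, so its derivative is just `w₂ / ‖v‖`, and `arcsin` has slope `1` at `0`. -/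

section

variable {E : Type*} [NormedAddCommGroup E] [NormedSpace ℝ E]

theorem HasFDerivAt.div {f g : E → ℝ} {f' g' : E →L[ℝ] ℝ} {x : E}
    (hf : HasFDerivAt f f' x) (hg : HasFDerivAt g g' x) (hx : g x ≠ 0) :
    HasFDerivAt (fun y => f y / g y) ((g x ^ 2)⁻¹ • (g x • f' - f x • g')) x := by
  simp_rw [div_eq_mul_inv]
  refine (hf.mul ((hasDerivAt_inv hx).comp_hasFDerivAt x hg)).congr_fderiv ?_
  ext w
  simp only [_root_.add_apply, _root_.smul_apply, _root_.neg_apply, _root_.sub_apply,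
    Function.comp_apply, neg_smul, smul_neg, smul_eq_mul]
  field_simp
  ring

theorem ContinuousLinearMap.map_pair (L : ℝ × ℝ →L[ℝ] E) (a b : ℝ) :
    L (a, b) = a • L (1, 0) + b • L (0, 1) := by
  rw [← map_smul, ← map_smul, ← map_add]
  simp

end

section

variable {ι : Type*} [Fintype ι]

noncomputable def dotProductCLM (u : ι → ℝ) : (ι → ℝ) →L[ℝ] ℝ :=
  LinearMap.toContinuousLinearMap (dotProductBilin ℝ ℝ u)

@[simp]
theorem dotProductCLM_apply (u w : ι → ℝ) : dotProductCLM u w = u ⬝ᵥ w := rfl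

theorem hasFDerivAt_dotProduct_self (u : ι → ℝ) :
    HasFDerivAt (fun y : ι → ℝ => y ⬝ᵥ y) ((2 : ℝ) • dotProductCLM u) u := by
  refine (HasFDerivAt.fun_sum (u := Finset.univ) fun i _ =>
    (hasFDerivAt_apply (𝕜 := ℝ) i u).mul (hasFDerivAt_apply i u)).congr_fderiv ?_
  ext w
  simp [dotProduct, Finset.mul_sum, two_mul]

theorem hasFDerivAt_arctan_div {i j : ι} {u : ι → ℝ} (hu : u i ≠ 0) :
    HasFDerivAt (fun y : ι → ℝ => arctan (y j / y i))
      ((u i ^ 2 + u j ^ 2)⁻¹ •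
        (u i • (ContinuousLinearMap.proj j : (ι → ℝ) →L[ℝ] ℝ) - u j • ContinuousLinearMap.proj i))
      u := by
  refine ((hasFDerivAt_apply (𝕜 := ℝ) j u).div (hasFDerivAt_apply i u) hu).arctan.congr_fderiv ?_
  ext w
  simp only [_root_.smul_apply, _root_.sub_apply, ContinuousLinearMap.proj_apply, smul_eq_mul,
    one_div]
  field_simp

theorem hasFDerivAt_arcsin_div_of_apply_eq_zero {N : (ι → ℝ) → ℝ} {j : ι} {u : ι → ℝ}
    (hN : DifferentiableAt ℝ N u) (hNu : N u ≠ 0) (hu : u j = 0) :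
    HasFDerivAt (fun y : ι → ℝ => arcsin (y j / N y))
      ((N u)⁻¹ • (ContinuousLinearMap.proj j : (ι → ℝ) →L[ℝ] ℝ)) u := by
  have hquot := (hasFDerivAt_apply (𝕜 := ℝ) j u).div hN.hasFDerivAt hNu
  refine ((hasDerivAt_arcsin (by simp [hu]) (by simp [hu])).comp_hasFDerivAt u hquot).congr_fderiv
    ?_
  ext w
  simp only [hu, zero_div, ne_eq, OfNat.ofNat_ne_zero, not_false_eq_true, zero_pow, sub_zero,
    sqrt_one, zero_smul, _root_.smul_apply, ContinuousLinearMap.proj_apply, smul_eq_mul]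
  field_simp

end

theorem norm3_sq (u : Fin 3 → ℝ) : norm3 u ^ 2 = u ⬝ᵥ u :=
  sq_sqrt (Finset.sum_nonneg fun i _ => mul_self_nonneg (u i))

theorem dotProduct_crossProduct_e2 (v w : Fin 3 → ℝ) :
    v ⬝ᵥ crossProduct e2 w = v 0 * w 2 - v 2 * w 0 := by
  simp [e2, crossProduct, dotProduct, Fin.sum_univ_three]
  ring

theorem jacobian_aero_force_general (ρ S : ℝ)
    (c : ℝ × ℝ → (Fin 3 → ℝ)) (hc : Differentiable ℝ c)
    (v : Fin 3 → ℝ) (hvx : v 0 ≠ 0) (hvy : v 1 = 0) :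
    ∀ w : Fin 3 → ℝ,
      fderiv ℝ
        (fun u : Fin 3 → ℝ =>
          (ρ * S / 2 * (norm3 u) ^ 2) •
            c (Real.arctan (u 2 / u 0), Real.arcsin (u 1 / norm3 u))) v w
      = (ρ * S / 2) •
          ((2 * (v ⬝ᵥ w)) • c (Real.arctan (v 2 / v 0), 0)
            + (v ⬝ᵥ (crossProduct e2 w)) • fderiv ℝ c (Real.arctan (v 2 / v 0), 0) (1, 0)
            + (norm3 v * w 1) • fderiv ℝ c (Real.arctan (v 2 / v 0), 0) (0, 1)) := by
  intro w
  have hvv : v ⬝ᵥ v = v 0 ^ 2 + v 2 ^ 2 := by simp [dotProduct, Fin.sum_univ_three, hvy, sq]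
  have hvv_pos : 0 < v ⬝ᵥ v := by rw [hvv]; positivity
  have hN_diff : DifferentiableAt ℝ norm3 v :=
    (hasFDerivAt_dotProduct_self v).differentiableAt.sqrt hvv_pos.ne'
  have hN_ne : norm3 v ≠ 0 := (sqrt_pos.2 hvv_pos).ne'
  have hβv : arcsin (v 1 / norm3 v) = 0 := by simp [hvy]
  have hα := hasFDerivAt_arctan_div (j := 2) hvx
  have hβ := hasFDerivAt_arcsin_div_of_apply_eq_zero hN_diff hN_ne hvy
  set D := fderiv ℝ c (arctan (v 2 / v 0), 0)
  have hcv : HasFDerivAt c D (arctan (v 2 / v 0), arcsin (v 1 / norm3 v)) := by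
    rw [hβv]; exact (hc _).hasFDerivAt
  have hF : HasFDerivAt
      (fun u => (ρ * S / 2 * u ⬝ᵥ u) • c (arctan (u 2 / u 0), arcsin (u 1 / norm3 u))) _ v :=
    ((hasFDerivAt_dotProduct_self v).const_mul (ρ * S / 2)).smul (hcv.comp v (hα.prodMk hβ))
  simp_rw [norm3_sq]
  rw [hF.fderiv]
  simp only [hβv, _root_.add_apply, _root_.smul_apply, _root_.sub_apply,
    ContinuousLinearMap.comp_apply, ContinuousLinearMap.prod_apply, ContinuousLinearMap.proj_apply,
    ContinuousLinearMap.smulRight_apply, dotProductCLM_apply, dotProduct_crossProduct_e2,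
    smul_eq_mul, smul_add]
  rw [D.map_pair]
  have hα_scale : v ⬝ᵥ v * (v 0 ^ 2 + v 2 ^ 2)⁻¹ = 1 := by
    rw [hvv]; exact mul_inv_cancel₀ (by positivity)
  have hβ_scale : v ⬝ᵥ v * (norm3 v)⁻¹ = norm3 v := by
    rw [← norm3_sq]; field_simp
  linear_combination (norm := module)
    (ρ * S / 2 * (v 0 * w 2 - v 2 * w 0) * hα_scale) • D (1, 0)
      + (ρ * S / 2 * w 1 * hβ_scale) • D (0, 1)

/-- Theorem 1 of the paper: Jacobian of the aerodynamic force
`f_a(v) = (ρS/2)‖v‖² c(α(v), β(v))` at a point with zero sideslip, for a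
symmetric airframe (`∂c/∂β(α,0)` has vanishing first and third components):
`∂f_a/∂v = (ρS/2)(2 c vᵀ + (∂c/∂α) vᵀ⌊e₂⌋ + ‖v‖ (∂c/∂β) e₂ᵀ)`. -/
theorem jacobian_aero_force (ρ S : ℝ) (hρ : 0 < ρ) (hS : 0 < S)
    (c : ℝ × ℝ → (Fin 3 → ℝ)) (hc : Differentiable ℝ c)
    (v : Fin 3 → ℝ) (hvx : v 0 ≠ 0) (hvy : v 1 = 0)
    (hsym0 : fderiv ℝ c (Real.arctan (v 2 / v 0), 0) (0, 1) 0 = 0)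
    (hsym2 : fderiv ℝ c (Real.arctan (v 2 / v 0), 0) (0, 1) 2 = 0) :
    ∀ w : Fin 3 → ℝ,
      fderiv ℝ
        (fun u : Fin 3 → ℝ =>
          (ρ * S / 2 * (norm3 u) ^ 2) •
            c (Real.arctan (u 2 / u 0), Real.arcsin (u 1 / norm3 u))) v w
      = (ρ * S / 2) •
          ((2 * (v ⬝ᵥ w)) • c (Real.arctan (v 2 / v 0), 0)
            + (v ⬝ᵥ (crossProduct e2 w)) • fderiv ℝ c (Real.arctan (v 2 / v 0), 0) (1, 0)
            + (norm3 v * w 1) • fderiv ℝ c (Real.arctan (v 2 / v 0), 0) (0, 1)) :=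
  jacobian_aero_force_general ρ S c hc v hvx hvy
end

section
/- Let N be the 4×4 block matrix N = [[0, v_aᵀR⌊e₂⌋], [Re₁, R·Ψ]] where R ∈ SO(3), v_a ∈ ℝ³, and Ψ = -⌊a_T e₁ + f_a/m⌋ + (1/m)(∂f_a/∂v_aᴮ)⌊v_aᴮ⌋ has the sparsity pattern Ψ = [[0, ψ₁₂, 0], [ψ₂₁, 0, ψ₂₃], [0, ψ₃₂, 0]], with v_aᴮ = Rᵀv_a = (‖v_a‖cos α, 0, ‖v_a‖sin α)ᵀ. Then det(N) = -ψ₃₂(v_az^B ψ₂₃ + v_ax^B ψ₂₁). -/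
open Matrix Real

def skew (a : Fin 3 → ℝ) : Matrix (Fin 3) (Fin 3) ℝ :=
  !![0, -a 2, a 1; a 2, 0, -a 0; -a 1, a 0, 0]

def e1 : Fin 3 → ℝ := ![1, 0, 0]
/-!
Multiplying the lower block row by `Rᵀ` (determinant one) turns `N` into the bordered matrix
`[[0, rᵀ], [e₁, Ψ]]` with `r = v_aᴮ × e₂ = (-v_az^B, 0, v_ax^B)`. Exchanging its first two rows
makes it block upper triangular, so `det N = -det Ψ'`, where `Ψ'` is `Ψ` with first row
replaced by `r`; by the sparsity of `Ψ` this `3 × 3` determinant factors through `ψ₃₂`.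
-/

namespace Matrix

variable {R : Type*} [CommRing R]

theorem det_fromBlocks_mul_bottom {m n : Type*} [Fintype m] [DecidableEq m] [Fintype n]
    [DecidableEq n] (A : Matrix m m R) (B : Matrix m n R) (C : Matrix n m R) (D Q : Matrix n n R) :
    (fromBlocks A B (Q * C) (Q * D)).det = Q.det * (fromBlocks A B C D).det := by
  have : fromBlocks A B (Q * C) (Q * D) = fromBlocks 1 0 0 Q * fromBlocks A B C D := by
    simp [fromBlocks_multiply]
  rw [this, det_mul, det_fromBlocks_zero₂₁, det_one, one_mul]

-- Exchanging the border row with row `i` of `D` makes the matrix block upper triangular.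
theorem det_fromBlocks_zero_replicateCol_single {κ ι : Type*} [Unique κ] [Fintype κ]
    [DecidableEq κ] [Fintype ι] [DecidableEq ι] (i : ι) (r : ι → R) (D : Matrix ι ι R) :
    (fromBlocks (0 : Matrix κ κ R) (replicateRow κ r) (replicateCol κ (Pi.single i 1)) D).det =
      -(D.updateRow i r).det := by
  set σ := Equiv.swap (Sum.inl default : κ ⊕ ι) (Sum.inr i)
  have hswap : (fromBlocks (0 : Matrix κ κ R) (replicateRow κ r)
      (replicateCol κ (Pi.single i 1)) D).submatrix σ id =
      fromBlocks 1 (replicateRow κ (D i)) 0 (D.updateRow i r) := by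
    ext (k | k) (l | l)
    · simp [σ, Unique.eq_default k, Unique.eq_default l]
    · simp [σ, Unique.eq_default k]
    all_goals rcases eq_or_ne k i with rfl | hk <;> simp [σ, Equiv.swap_apply_of_ne_of_ne, *]
  have := det_permute σ (fromBlocks (0 : Matrix κ κ R) (replicateRow κ r)
      (replicateCol κ (Pi.single i 1)) D)
  rw [hswap, det_fromBlocks_zero₂₁, det_one, one_mul, Equiv.Perm.sign_swap (by simp)] at this
  simp [this]

end Matrix

theorem vecMul_skew (v a : Fin 3 → ℝ) : v ᵥ* skew a = v ⨯₃ a := by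
  ext i
  fin_cases i <;>
    simp [skew, vecMul, dotProduct, Fin.sum_univ_three, cross_apply, mul_comm, sub_eq_add_neg,
      add_comm]

theorem e1_eq_single : e1 = Pi.single 0 1 := by
  ext i
  fin_cases i <;> rfl

theorem det_N_block_general (R : Matrix (Fin 3) (Fin 3) ℝ)
    (hRdet : R.det = 1)
    (va : Fin 3 → ℝ) (α ψ12 ψ21 ψ23 ψ32 : ℝ)
    (Ψ : Matrix (Fin 3) (Fin 3) ℝ)
    (hΨ : Ψ = !![0, ψ12, 0; ψ21, 0, ψ23; 0, ψ32, 0])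
    (hvaB : Rᵀ *ᵥ va = ![norm3 va * Real.cos α, 0, norm3 va * Real.sin α])
    (N : Matrix (Fin 1 ⊕ Fin 3) (Fin 1 ⊕ Fin 3) ℝ)
    (hN : N = Matrix.fromBlocks 0
      (Matrix.of fun _ j => (va ᵥ* (R * skew e2)) j)
      (Matrix.of fun i _ => (R *ᵥ e1) i)
      (R * Ψ)) :
    N.det = -ψ32 * (norm3 va * Real.sin α * ψ23 + norm3 va * Real.cos α * ψ21) := by
  have hN' : N = fromBlocks 0 (replicateRow (Fin 1) ((Rᵀ *ᵥ va) ⨯₃ e2))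
      (R * replicateCol (Fin 1) e1) (R * Ψ) := by
    rw [hN, ← replicateCol_mulVec, ← vecMul_skew, mulVec_transpose, vecMul_vecMul]
    rfl
  rw [hN', det_fromBlocks_mul_bottom, hRdet, one_mul, e1_eq_single,
    det_fromBlocks_zero_replicateCol_single, hvaB, hΨ]
  simp only [det_fin_three, updateRow_self, updateRow_ne, cross_apply, e2, of_apply, cons_val,
    Fin.isValue, ne_eq, Fin.reduceEq, not_false_eq_true, cons_val_zero, cons_val_one]
  ring

/-- determinant of the flatness linear-system matrix
`N = [[0, v_aᵀR⌊e₂⌋], [Re₁, RΨ]]` with sparse `Ψ` and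
`v_aᴮ = Rᵀv_a = (‖v_a‖cos α, 0, ‖v_a‖sin α)ᵀ`:
`det N = -ψ₃₂ (v_az^B ψ₂₃ + v_ax^B ψ₂₁)`. -/
theorem det_N_block (R : Matrix (Fin 3) (Fin 3) ℝ)
    (hR : Rᵀ * R = 1) (hRdet : R.det = 1)
    (va : Fin 3 → ℝ) (α ψ12 ψ21 ψ23 ψ32 : ℝ)
    (Ψ : Matrix (Fin 3) (Fin 3) ℝ)
    (hΨ : Ψ = !![0, ψ12, 0; ψ21, 0, ψ23; 0, ψ32, 0])
    (hvaB : Rᵀ *ᵥ va = ![norm3 va * Real.cos α, 0, norm3 va * Real.sin α])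
    (N : Matrix (Fin 1 ⊕ Fin 3) (Fin 1 ⊕ Fin 3) ℝ)
    (hN : N = Matrix.fromBlocks 0
      (Matrix.of fun _ j => (va ᵥ* (R * skew e2)) j)
      (Matrix.of fun i _ => (R *ᵥ e1) i)
      (R * Ψ)) :
    N.det = -ψ32 * (norm3 va * Real.sin α * ψ23 + norm3 va * Real.cos α * ψ21) :=
  det_N_block_general R hRdet va α ψ12 ψ21 ψ23 ψ32 Ψ hΨ hvaB N hN
end

section
/- Combining the previous results: under the symmetric-airframe aerodynamic assumptions, the determinant of the flatness linear-system matrix N satisfies det(N) = -(ρSV²/(2m)) · (∂F/∂α) · ‖v_a × (v̇ - g)‖, where F(α) = h sin(γ - α) + c_z(α, 0) with h = 2m‖v̇ - g‖/(ρV²S). Hence N is invertible if and only if ∂F/∂α ≠ 0 and v_a × (v̇ - g) ≠ 0. -/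
open Matrix Real

/-!
`N` factors as `diag(1, R)` times the bordered matrix `[[0, rᵀ], [e₁, Ψ]]` with
`r = ⌊e₂⌋ᵀ Rᵀ v_a = (-V sin α, 0, V cos α)`, so `det N = det R · ψ₃₂ (r₀ ψ₂₃ - r₂ ψ₂₁)`.
In the bracket the side-force terms `c_yβ` cancel and `sin α cos (γ - α) + cos α sin (γ - α) = sin γ`
leaves `-V ‖u‖ sin γ = -‖v_a × u‖`, while `ψ₃₂ = (ρSV²/(2m)) F'(α)` by the choice of `h`.
-/

theorem norm3_eq_zero_iff {v : Fin 3 → ℝ} : norm3 v = 0 ↔ v = 0 := by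
  have hnonneg : 0 ≤ v ⬝ᵥ v := Fintype.sum_nonneg fun i => mul_self_nonneg (v i)
  rw [norm3, Real.sqrt_eq_zero hnonneg, dotProduct_self_eq_zero]

theorem vecMul_skew_e2 (w : Fin 3 → ℝ) : w ᵥ* skew e2 = ![-w 2, 0, w 0] := by
  ext j
  fin_cases j <;> simp [vecMul, dotProduct, Fin.sum_univ_three, skew, e2]

section Bordered

variable {n K : Type*} [Fintype n] [CommRing K]

def bordered (r c : n → K) (A : Matrix n n K) : Matrix (Fin 1 ⊕ n) (Fin 1 ⊕ n) K :=
  fromBlocks 0 (of fun _ j => r j) (of fun i _ => c i) A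

theorem fromBlocks_one_mul_bordered (R A : Matrix n n K) (r c : n → K) :
    fromBlocks 1 0 0 R * bordered r c A = bordered r (R *ᵥ c) (R * A) := by
  rw [bordered, bordered, fromBlocks_multiply]
  congr 1 <;> ext <;> simp [mul_apply, mulVec, dotProduct]

theorem det_bordered_mul [DecidableEq n] (R A : Matrix n n K) (r c : n → K) :
    (bordered r (R *ᵥ c) (R * A)).det = R.det * (bordered r c A).det := by
  rw [← fromBlocks_one_mul_bordered, det_mul, det_fromBlocks_zero₂₁, det_one, one_mul]

end Bordered

theorem det_bordered_e1 (r : Fin 3 → ℝ) (p₁₂ p₂₁ p₂₃ p₃₂ : ℝ) :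
    (bordered r e1 !![0, p₁₂, 0; p₂₁, 0, p₂₃; 0, p₃₂, 0]).det = p₃₂ * (r 0 * p₂₃ - r 2 * p₂₁) := by
  rw [← det_reindex_self finSumFinEquiv]
  have hreindex : reindex finSumFinEquiv finSumFinEquiv (bordered r e1 !![0, p₁₂, 0; p₂₁, 0, p₂₃; 0, p₃₂, 0])
      = !![0, r 0, r 1, r 2; 1, 0, p₁₂, 0; 0, p₂₁, 0, p₂₃; 0, 0, p₃₂, 0] := by
    ext i j
    fin_cases i <;> fin_cases j <;> rfl
  rw [hreindex, det_succ_column_zero, Fin.sum_univ_four]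
  simp [det_fin_three, Fin.succAbove]
  ring

theorem hasDerivAt_mul_sin_sub_add {c : ℝ → ℝ} {α : ℝ} (h γ : ℝ) (hc : DifferentiableAt ℝ c α) :
    HasDerivAt (fun a => h * sin (γ - a) + c a) (-(h * cos (γ - α)) + deriv c α) α := by
  have hsin : HasDerivAt (fun a => sin (γ - a)) (-cos (γ - α)) α := by
    simpa using ((hasDerivAt_id α).const_sub γ).sin
  have hsum := (hsin.const_mul h).add hc.hasDerivAt
  rw [mul_neg] at hsum
  exact hsum

theorem det_N_flatness_general (m ρ S V α γ cyβ : ℝ)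
    (hm : 0 < m) (hρ : 0 < ρ) (hS : 0 < S) (hV : 0 < V)
    (va u : Fin 3 → ℝ)
    (hcross : norm3 (va ⨯₃ u) = V * norm3 u * Real.sin γ)
    (cz : ℝ → ℝ) (hcz : DifferentiableAt ℝ cz α)
    (h : ℝ) (hh : h = 2 * m * norm3 u / (ρ * V ^ 2 * S))
    (F : ℝ → ℝ) (hF : F = fun a => h * Real.sin (γ - a) + cz a)
    (ψ12 ψ21 ψ23 ψ32 : ℝ)
    (h21 : ψ21 = norm3 u * Real.sin (γ - α) + ρ * S * V ^ 2 / (2 * m) * cyβ * Real.sin α)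
    (h23 : ψ23 = norm3 u * Real.cos (γ - α) - ρ * S * V ^ 2 / (2 * m) * cyβ * Real.cos α)
    (h32 : ψ32 = -norm3 u * Real.cos (γ - α) + ρ * S * V ^ 2 / (2 * m) * deriv cz α)
    (Ψ : Matrix (Fin 3) (Fin 3) ℝ)
    (hΨ : Ψ = !![0, ψ12, 0; ψ21, 0, ψ23; 0, ψ32, 0])
    (R : Matrix (Fin 3) (Fin 3) ℝ) (hRdet : R.det = 1)
    (hvaB : Rᵀ *ᵥ va = ![V * Real.cos α, 0, V * Real.sin α])
    (N : Matrix (Fin 1 ⊕ Fin 3) (Fin 1 ⊕ Fin 3) ℝ)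
    (hN : N = Matrix.fromBlocks 0
      (Matrix.of fun _ j => (va ᵥ* (R * skew e2)) j)
      (Matrix.of fun i _ => (R *ᵥ e1) i)
      (R * Ψ)) :
    N.det = -(ρ * S * V ^ 2 / (2 * m)) * deriv F α * norm3 (va ⨯₃ u) ∧
      (N.det ≠ 0 ↔ deriv F α ≠ 0 ∧ va ⨯₃ u ≠ 0) := by
  have hk : ρ * S * V ^ 2 / (2 * m) ≠ 0 := by positivity
  have hrow : va ᵥ* (R * skew e2) = ![-(V * sin α), 0, V * cos α] := by
    rw [← vecMul_vecMul, ← mulVec_transpose R, hvaB, vecMul_skew_e2]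
    simp
  have hψ32 : ψ32 = ρ * S * V ^ 2 / (2 * m) * deriv F α := by
    rw [h32, hF, (hasDerivAt_mul_sin_sub_add h γ hcz).deriv, hh]
    field_simp
  have hbracket : -(V * sin α) * ψ23 - V * cos α * ψ21 = -norm3 (va ⨯₃ u) := by
    have hsinγ : sin γ = sin α * cos (γ - α) + cos α * sin (γ - α) := by
      rw [← sin_add, add_sub_cancel]
    rw [h21, h23, hcross, hsinγ]
    ring
  have hdet : N.det = -(ρ * S * V ^ 2 / (2 * m)) * deriv F α * norm3 (va ⨯₃ u) := by
    have hN_bordered : N = bordered (va ᵥ* (R * skew e2)) (R *ᵥ e1) (R * Ψ) := hN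
    rw [hN_bordered, det_bordered_mul, hRdet, hΨ, det_bordered_e1, hrow]
    simp only [cons_val_zero, cons_val_two, tail_cons, head_cons]
    rw [hbracket, hψ32]
    ring
  refine ⟨hdet, ?_⟩
  rw [hdet]
  simp only [ne_eq, mul_eq_zero, neg_eq_zero, hk, norm3_eq_zero_iff, false_or, not_or]

/-- Theorem 2 of the paper: under the symmetric-airframe
aerodynamic assumptions, the flatness linear-system matrix satisfies
`det N = -(ρSV²/(2m)) (∂F/∂α) ‖v_a × (v̇ - g)‖` where
`F(α) = h sin(γ-α) + c_z(α,0)`, `h = 2m‖v̇-g‖/(ρV²S)`; hence `N` is invertible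
iff `∂F/∂α ≠ 0` and `v_a × (v̇ - g) ≠ 0`. -/
theorem det_N_flatness (m ρ S V α γ cyβ : ℝ)
    (hm : 0 < m) (hρ : 0 < ρ) (hS : 0 < S) (hV : 0 < V)
    (va u : Fin 3 → ℝ) (hVva : V = norm3 va)
    (hcross : norm3 (va ⨯₃ u) = V * norm3 u * Real.sin γ)
    (cz : ℝ → ℝ) (hcz : DifferentiableAt ℝ cz α)
    (h : ℝ) (hh : h = 2 * m * norm3 u / (ρ * V ^ 2 * S))
    (F : ℝ → ℝ) (hF : F = fun a => h * Real.sin (γ - a) + cz a)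
    (ψ12 ψ21 ψ23 ψ32 : ℝ)
    (h21 : ψ21 = norm3 u * Real.sin (γ - α) + ρ * S * V ^ 2 / (2 * m) * cyβ * Real.sin α)
    (h23 : ψ23 = norm3 u * Real.cos (γ - α) - ρ * S * V ^ 2 / (2 * m) * cyβ * Real.cos α)
    (h32 : ψ32 = -norm3 u * Real.cos (γ - α) + ρ * S * V ^ 2 / (2 * m) * deriv cz α)
    (Ψ : Matrix (Fin 3) (Fin 3) ℝ)
    (hΨ : Ψ = !![0, ψ12, 0; ψ21, 0, ψ23; 0, ψ32, 0])
    (R : Matrix (Fin 3) (Fin 3) ℝ) (hR : Rᵀ * R = 1) (hRdet : R.det = 1)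
    (hvaB : Rᵀ *ᵥ va = ![V * Real.cos α, 0, V * Real.sin α])
    (N : Matrix (Fin 1 ⊕ Fin 3) (Fin 1 ⊕ Fin 3) ℝ)
    (hN : N = Matrix.fromBlocks 0
      (Matrix.of fun _ j => (va ᵥ* (R * skew e2)) j)
      (Matrix.of fun i _ => (R *ᵥ e1) i)
      (R * Ψ)) :
    N.det = -(ρ * S * V ^ 2 / (2 * m)) * deriv F α * norm3 (va ⨯₃ u) ∧
      (N.det ≠ 0 ↔ deriv F α ≠ 0 ∧ va ⨯₃ u ≠ 0) :=
  det_N_flatness_general m ρ S V α γ cyβ hm hρ hS hV va u hcross cz hcz h hh F hF ψ12 ψ21 ψ23 ψ32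
    h21 h23 h32 Ψ hΨ R hRdet hvaB N hN
end
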